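/- For the triangular tiling representation with rotation angle θ = π/3: define Σ_K(x) = Σ_{|w|=K, .w ≤ x} A_w V_0 where A_0 = R_{−π/3}, A_1 = R_{π/3} are 2×2 rotation matrices and V_0 = (1,0)^T. Let y_{2K} = (0.(01)^K)_2 and x_{2K+2} = (0.11(01)^K)_2. Then Σ_{2K}(y_{2K}) = K·V_{−2π/3} + V_0 and Σ_{2K+2}(x_{2K+2}) = (K+1)·V_0 for all K ≥ 0, where V_φ = R_φ V_0. In particular ‖Σ_{2K+2}(x_{2K+2})‖ = K+1 grows linearly in K even though the joint spectral radius of {A_0, A_1} is 1. -/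
import Mathlib


open Matrix Real

/-- The 2×2 rotation matrix of angle `θ`. -/
noncomputable def rotM (θ : ℝ) : Matrix (Fin 2) (Fin 2) ℝ :=
  !![Real.cos θ, -Real.sin θ; Real.sin θ, Real.cos θ]

/-- The matrices of the triangular-tiling representation, `A_0 = R_{−π/3}`,
`A_1 = R_{π/3}`. -/
noncomputable def triA : Fin 2 → Matrix (Fin 2) (Fin 2) ℝ
  | 0 => rotM (-(π/3))
  | 1 => rotM (π/3)

/-- `V_φ = R_φ · (1,0)ᵀ`. -/
noncomputable def triV (φ : ℝ) : Fin 2 → ℝ := rotM φ *ᵥ ![1, 0]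

/-- `Σ_K(x) = Σ_{|w|=K, .w ≤ x} A_w V₀`. -/
noncomputable def triSig (K : ℕ) (x : ℝ) : Fin 2 → ℝ :=
  ∑ w ∈ Finset.univ.filter
      (fun w : Fin K → Fin 2 =>
        (∑ i : Fin K, ((w i : ℕ) : ℝ) / 2 ^ ((i : ℕ) + 1)) ≤ x),
    ((List.ofFn fun i => triA (w i)).prod) *ᵥ ![1, 0]

noncomputable def wval {n : ℕ} (w : Fin n → Fin 2) : ℝ :=
  ∑ i : Fin n, ((w i : ℕ) : ℝ) / 2 ^ ((i : ℕ) + 1)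

noncomputable def wmat {n : ℕ} (w : Fin n → Fin 2) : Matrix (Fin 2) (Fin 2) ℝ :=
  (List.ofFn fun i => triA (w i)).prod

lemma triSig_def (n : ℕ) (x : ℝ) :
    triSig n x = ∑ w ∈ Finset.univ.filter (fun w : Fin n → Fin 2 => wval w ≤ x),
      wmat w *ᵥ ![1, 0] := rfl

lemma wval_nonneg {n : ℕ} (w : Fin n → Fin 2) : 0 ≤ wval w :=
  Finset.sum_nonneg fun i _ => by positivity

lemma wval_cons {n : ℕ} (a : Fin 2) (u : Fin n → Fin 2) :
    wval (Fin.cons a u) = (a : ℝ) / 2 + wval u / 2 := by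
  unfold wval
  rw [Fin.sum_univ_succ]
  congr 1
  · simp
  · rw [Finset.sum_div]
    refine Finset.sum_congr rfl fun i _ => ?_
    simp only [Fin.cons_succ, Fin.val_succ]
    rw [pow_succ]
    ring

lemma wmat_cons {n : ℕ} (a : Fin 2) (u : Fin n → Fin 2) :
    wmat (Fin.cons a u) = triA a * wmat u := by
  unfold wmat
  rw [List.ofFn_succ, List.prod_cons]
  simp [Fin.cons_zero, Fin.cons_succ]

lemma wval_lt_one {n : ℕ} (w : Fin n → Fin 2) : wval w < 1 := by
  induction n with
  | zero => simp [wval]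
  | succ n ih =>
    rw [← Fin.cons_self_tail w, wval_cons]
    have h1 : ((w 0 : ℕ) : ℝ) ≤ 1 := by
      have := (w 0).is_lt; exact_mod_cast Nat.lt_succ_iff.mp this
    have h2 := ih (Fin.tail w)
    linarith

lemma triSig_succ (n : ℕ) (x : ℝ) :
    triSig (n+1) x = triA 0 *ᵥ triSig n (2*x) + triA 1 *ᵥ triSig n (2*x - 1) := by
  have key : ∀ (a : Fin 2) (t : ℝ), triA a *ᵥ triSig n t
      = ∑ u : Fin n → Fin 2, if wval u ≤ t then triA a *ᵥ (wmat u *ᵥ ![1, 0]) else 0 := by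
    intro a t
    rw [triSig_def, Finset.sum_filter]
    have hms := map_sum (Matrix.mulVecLin (triA a))
      (fun u : Fin n → Fin 2 => if wval u ≤ t then wmat u *ᵥ ![1, 0] else 0) Finset.univ
    simp only [Matrix.mulVecLin_apply] at hms
    rw [hms]
    refine Finset.sum_congr rfl fun u _ => ?_
    split <;> simp
  rw [key, key]
  rw [triSig_def, Finset.sum_filter]
  rw [← (Fin.consEquiv (fun _ : Fin (n+1) => Fin 2)).sum_comp
    (fun w => if wval w ≤ x then wmat w *ᵥ ![1,0] else 0)]
  rw [Fintype.sum_prod_type]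
  rw [Fin.sum_univ_two]
  refine congrArg₂ (· + ·) ?_ ?_
  · refine Finset.sum_congr rfl fun u _ => ?_
    have hc : Fin.consEquiv (fun _ : Fin (n+1) => Fin 2) ((0 : Fin 2), u)
        = Fin.cons (0 : Fin 2) u := rfl
    rw [hc, wval_cons, wmat_cons, ← Matrix.mulVec_mulVec]
    refine if_congr ?_ rfl rfl
    simp only [Fin.val_zero, Nat.cast_zero]
    constructor <;> intro h <;> linarith
  · refine Finset.sum_congr rfl fun u _ => ?_
    have hc : Fin.consEquiv (fun _ : Fin (n+1) => Fin 2) ((1 : Fin 2), u)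
        = Fin.cons (1 : Fin 2) u := rfl
    rw [hc, wval_cons, wmat_cons, ← Matrix.mulVec_mulVec]
    refine if_congr ?_ rfl rfl
    simp only [Fin.val_one, Nat.cast_one]
    constructor <;> intro h <;> linarith

lemma triSig_of_neg {n : ℕ} {x : ℝ} (h : x < 0) : triSig n x = 0 := by
  rw [triSig_def, Finset.filter_false_of_mem, Finset.sum_empty]
  intro u _
  push_neg
  exact lt_of_lt_of_le h (wval_nonneg u)

lemma sin_pi_div_3 : Real.sin (π/3) = Real.sqrt 3 / 2 := Real.sin_pi_div_three
lemma cos_pi_div_3 : Real.cos (π/3) = 1/2 := Real.cos_pi_div_three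

lemma triA_zero : triA 0 = !![1/2, Real.sqrt 3 / 2; -(Real.sqrt 3 / 2), 1/2] := by
  simp [triA, rotM, Real.cos_pi_div_three, Real.sin_pi_div_three]

lemma triA_one : triA 1 = !![1/2, -(Real.sqrt 3 / 2); Real.sqrt 3 / 2, 1/2] := by
  simp [triA, rotM, Real.cos_pi_div_three, Real.sin_pi_div_three]

lemma triV_neg : triV (-(2*π/3)) = ![-(1/2), -(Real.sqrt 3 / 2)] := by
  have h : 2*π/3 = π - π/3 := by ring
  funext i
  fin_cases i <;>
    simp [triV, rotM, h, Real.cos_pi_sub, Real.sin_pi_sub, Real.cos_pi_div_three,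
      Real.sin_pi_div_three, Matrix.mulVec, dotProduct, Fin.sum_univ_two]

lemma triSig_of_one_le : ∀ {n : ℕ} {x : ℝ}, 1 ≤ x → triSig n x = ![1, 0] := by
  intro n
  induction n with
  | zero =>
    intro x hx
    rw [triSig_def, Finset.filter_true_of_mem, Fintype.sum_unique]
    · simp [wmat, List.ofFn_zero, Matrix.one_mulVec]
    · intro u _
      calc wval u ≤ 0 := le_of_eq (by simp [wval])
        _ ≤ x := by linarith
  | succ n ih =>
    intro x hx
    rw [triSig_succ, ih (by linarith), ih (by linarith)]
    funext i
    fin_cases i <;>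
      norm_num [triA_zero, triA_one, Matrix.mulVec, dotProduct, Fin.sum_univ_two]

example : True := trivial

lemma triSig_zero {x : ℝ} (h : 0 ≤ x) : triSig 0 x = ![1, 0] := by
  rw [triSig_def, Finset.filter_true_of_mem, Fintype.sum_unique]
  · simp [wmat, Matrix.one_mulVec]
  · intro u _
    simpa [wval] using h

lemma hsqrt3 : Real.sqrt 3 * Real.sqrt 3 = 3 := Real.mul_self_sqrt (by norm_num)

lemma part1 : ∀ K : ℕ,
    triSig (2*K) ((1 - (4:ℝ)⁻¹ ^ K) / 3) = (K : ℝ) • triV (-(2*π/3)) + ![1, 0] := by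
  intro K
  induction K with
  | zero =>
    rw [show ((1 - (4:ℝ)⁻¹ ^ 0) / 3) = 0 by norm_num]
    rw [show 2*0 = 0 from rfl, triSig_zero le_rfl]
    funext i; fin_cases i <;> simp
  | succ K ih =>
    have hq0 : (0:ℝ) < (4:ℝ)⁻¹ ^ K := by positivity
    have hq1 : (4:ℝ)⁻¹ ^ K ≤ 1 := pow_le_one₀ (by norm_num) (by norm_num)
    have hy0 : 0 ≤ (1 - (4:ℝ)⁻¹ ^ K) / 3 := by linarith
    have hy1 : (1 - (4:ℝ)⁻¹ ^ K) / 3 < 1/2 := by linarith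
    have harg : (1 - (4:ℝ)⁻¹ ^ (K+1)) / 3 = 1/4 + ((1 - (4:ℝ)⁻¹ ^ K) / 3)/4 := by
      rw [pow_succ]; ring
    rw [show 2*(K+1) = 2*K+1+1 by ring, harg, triSig_succ]
    rw [show 2*(1/4 + ((1 - (4:ℝ)⁻¹ ^ K) / 3)/4) - 1
        = ((1 - (4:ℝ)⁻¹ ^ K) / 3)/2 - 1/2 by ring]
    rw [triSig_of_neg (x := (1 - (4:ℝ)⁻¹ ^ K) / 3 / 2 - 1/2) (by linarith),
      Matrix.mulVec_zero, add_zero, triSig_succ]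
    rw [show 2*(2*(1/4 + ((1 - (4:ℝ)⁻¹ ^ K) / 3)/4)) = 1 + (1 - (4:ℝ)⁻¹ ^ K) / 3 by ring]
    rw [show 1 + (1 - (4:ℝ)⁻¹ ^ K) / 3 - 1 = (1 - (4:ℝ)⁻¹ ^ K) / 3 by ring]
    rw [triSig_of_one_le (by linarith), ih]
    funext i
    push_cast
    fin_cases i
    · simp [triA_zero, triA_one, triV_neg, Matrix.mulVec, dotProduct,
        Fin.sum_univ_two, Fin.mk_zero, Fin.mk_one]
      linear_combination (-(K:ℝ)/8) * hsqrt3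
    · simp [triA_zero, triA_one, triV_neg, Matrix.mulVec, dotProduct,
        Fin.sum_univ_two, Fin.mk_zero, Fin.mk_one]
      linear_combination (-(K:ℝ) * Real.sqrt 3 / 8) * hsqrt3

lemma part2 (K : ℕ) :
    triSig (2*K + 2) (1/2 + 1/4 + ((1 - (4:ℝ)⁻¹ ^ K) / 3) / 4)
      = ((K : ℝ) + 1) • ![1, 0] := by
  have hq0 : (0:ℝ) < (4:ℝ)⁻¹ ^ K := by positivity
  have hq1 : (4:ℝ)⁻¹ ^ K ≤ 1 := pow_le_one₀ (by norm_num) (by norm_num)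
  rw [show 2*K+2 = 2*K+1+1 from rfl, triSig_succ]
  rw [show 2*(1/2 + 1/4 + ((1 - (4:ℝ)⁻¹ ^ K) / 3) / 4)
      = 1 + (1/2 + ((1 - (4:ℝ)⁻¹ ^ K) / 3)/2) by ring]
  rw [triSig_of_one_le (x := 1 + (1/2 + ((1 - (4:ℝ)⁻¹ ^ K) / 3)/2)) (by linarith)]
  rw [show 1 + (1/2 + ((1 - (4:ℝ)⁻¹ ^ K) / 3)/2) - 1
      = 1/2 + ((1 - (4:ℝ)⁻¹ ^ K) / 3)/2 by ring]
  rw [triSig_succ]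
  rw [show 2*(1/2 + ((1 - (4:ℝ)⁻¹ ^ K) / 3)/2) = 1 + (1 - (4:ℝ)⁻¹ ^ K) / 3 by ring]
  rw [triSig_of_one_le (x := 1 + (1 - (4:ℝ)⁻¹ ^ K) / 3) (by linarith)]
  rw [show 1 + (1 - (4:ℝ)⁻¹ ^ K) / 3 - 1 = (1 - (4:ℝ)⁻¹ ^ K) / 3 by ring]
  rw [part1 K]
  funext i
  fin_cases i
  · simp [triA_zero, triA_one, triV_neg, Matrix.mulVec, dotProduct,
      Fin.sum_univ_two, Fin.mk_zero, Fin.mk_one]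
    linear_combination (3*(K:ℝ)/8) * hsqrt3
  · simp [triA_zero, triA_one, triV_neg, Matrix.mulVec, dotProduct,
      Fin.sum_univ_two, Fin.mk_zero, Fin.mk_one]
    linear_combination ((K:ℝ) * Real.sqrt 3 / 8) * hsqrt3

lemma part3 (K : ℕ) :
    Real.sqrt ((triSig (2*K + 2) (1/2 + 1/4 + ((1 - (4:ℝ)⁻¹ ^ K) / 3) / 4) 0) ^ 2
        + (triSig (2*K + 2) (1/2 + 1/4 + ((1 - (4:ℝ)⁻¹ ^ K) / 3) / 4) 1) ^ 2)
      = (K : ℝ) + 1 := by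
  rw [part2 K]
  have h0 : ((((K : ℝ) + 1) • ![1, 0]) : Fin 2 → ℝ) 0 = (K : ℝ) + 1 := by simp
  have h1 : ((((K : ℝ) + 1) • ![1, 0]) : Fin 2 → ℝ) 1 = 0 := by simp
  rw [h0, h1]
  rw [show ((K : ℝ) + 1)^2 + 0^2 = ((K : ℝ) + 1)^2 by ring]
  exact Real.sqrt_sq (by positivity)

lemma rotM_mul (a b : ℝ) : rotM a * rotM b = rotM (a + b) := by
  funext i j
  fin_cases i <;> fin_cases j <;>
    simp [rotM, Matrix.mul_apply, Fin.sum_univ_two, Real.cos_add, Real.sin_add] <;> ring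

lemma wmat_rot : ∀ {n : ℕ} (w : Fin n → Fin 2), ∃ φ, wmat w = rotM φ := by
  intro n
  induction n with
  | zero =>
    intro w
    exact ⟨0, by simp [wmat, rotM, Matrix.one_fin_two]⟩
  | succ n ih =>
    intro w
    obtain ⟨φ, hφ⟩ := ih (Fin.tail w)
    have hlt := (w 0).isLt
    have h2 : w 0 = 0 ∨ w 0 = 1 := by
      have hv : (w 0).val = 0 ∨ (w 0).val = 1 := by omega
      rcases hv with h | h
      · exact Or.inl (Fin.ext h)
      · exact Or.inr (Fin.ext h)
    rcases h2 with h | h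
    · refine ⟨-(π/3) + φ, ?_⟩
      rw [← Fin.cons_self_tail w, wmat_cons, hφ, h,
        show triA 0 = rotM (-(π/3)) from rfl, rotM_mul]
    · refine ⟨π/3 + φ, ?_⟩
      rw [← Fin.cons_self_tail w, wmat_cons, hφ, h,
        show triA 1 = rotM (π/3) from rfl, rotM_mul]

lemma clm_apply (A : Matrix (Fin 2) (Fin 2) ℝ) (v : EuclideanSpace ℝ (Fin 2)) (i : Fin 2) :
    Matrix.toEuclideanCLM (𝕜 := ℝ) A v i = (A *ᵥ (WithLp.equiv 2 _ v)) i := rfl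

lemma norm_rotCLM (φ : ℝ) : ‖Matrix.toEuclideanCLM (𝕜 := ℝ) (rotM φ)‖ = 1 := by
  have hiso : ∀ v : EuclideanSpace ℝ (Fin 2),
      ‖Matrix.toEuclideanCLM (𝕜 := ℝ) (rotM φ) v‖ = ‖v‖ := by
    intro v
    rw [EuclideanSpace.norm_eq, EuclideanSpace.norm_eq]
    congr 1
    rw [Fin.sum_univ_two, Fin.sum_univ_two, clm_apply, clm_apply]
    simp only [rotM, Matrix.mulVec, dotProduct, Fin.sum_univ_two, Real.norm_eq_abs,
      sq_abs, Matrix.cons_val_zero, Matrix.cons_val_one, Matrix.head_cons, Matrix.of_apply,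
      Matrix.cons_val', Matrix.empty_val', Matrix.cons_val_fin_one, Matrix.head_fin_const]
    have hsc := Real.sin_sq_add_cos_sq φ
    have hv : ∀ i : Fin 2, (WithLp.equiv 2 (Fin 2 → ℝ)) v i = v i := fun _ => rfl
    rw [hv, hv]
    linear_combination ((v 0)^2 + (v 1)^2) * hsc
  apply le_antisymm
  · refine ContinuousLinearMap.opNorm_le_bound _ zero_le_one fun v => ?_
    rw [hiso, one_mul]
  · have hv : ‖(EuclideanSpace.single 0 (1:ℝ) : EuclideanSpace ℝ (Fin 2))‖ = 1 := by
      rw [EuclideanSpace.norm_single]; norm_num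
    have h := (Matrix.toEuclideanCLM (𝕜 := ℝ) (rotM φ)).le_opNorm (EuclideanSpace.single 0 1)
    rw [hiso, hv, mul_one] at h
    exact h

/-- with `y_{2K} = (1−4^{−K})/3` and
`x_{2K+2} = 1/2 + 1/4 + y_{2K}/4`, one has `Σ_{2K}(y_{2K}) = K·V_{−2π/3} + V₀`
and `Σ_{2K+2}(x_{2K+2}) = (K+1)·V₀`, so `‖Σ_{2K+2}(x_{2K+2})‖ = K+1` grows
linearly although the joint spectral radius of `{A_0, A_1}` is `1`. -/
theorem triangular_tiling_linear_growth :
    (∀ K : ℕ,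
      triSig (2*K) ((1 - (4:ℝ)⁻¹ ^ K) / 3)
        = (K : ℝ) • triV (-(2*π/3)) + ![1, 0] ∧
      triSig (2*K + 2) (1/2 + 1/4 + ((1 - (4:ℝ)⁻¹ ^ K) / 3) / 4)
        = ((K : ℝ) + 1) • ![1, 0] ∧
      Real.sqrt ((triSig (2*K + 2) (1/2 + 1/4 + ((1 - (4:ℝ)⁻¹ ^ K) / 3) / 4) 0) ^ 2
          + (triSig (2*K + 2) (1/2 + 1/4 + ((1 - (4:ℝ)⁻¹ ^ K) / 3) / 4) 1) ^ 2)
        = (K : ℝ) + 1) ∧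
    Filter.Tendsto
      (fun T : ℕ => (Finset.univ.sup' Finset.univ_nonempty
        fun w : Fin T → Fin 2 =>
          ‖Matrix.toEuclideanCLM (𝕜 := ℝ) (List.ofFn fun i => triA (w i)).prod‖)
        ^ ((1 : ℝ) / T)) Filter.atTop (nhds 1) := by
  refine ⟨fun K => ⟨part1 K, part2 K, part3 K⟩, ?_⟩
  have hconst : ∀ T : ℕ, (Finset.univ.sup' Finset.univ_nonempty
      fun w : Fin T → Fin 2 =>
        ‖Matrix.toEuclideanCLM (𝕜 := ℝ) (List.ofFn fun i => triA (w i)).prod‖) = 1 := by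
    intro T
    have h1 : ∀ w : Fin T → Fin 2,
        ‖Matrix.toEuclideanCLM (𝕜 := ℝ) (List.ofFn fun i => triA (w i)).prod‖ = 1 := by
      intro w
      obtain ⟨φ, hφ⟩ := wmat_rot w
      rw [show (List.ofFn fun i => triA (w i)).prod = wmat w from rfl, hφ, norm_rotCLM]
    apply le_antisymm
    · exact Finset.sup'_le _ _ fun w _ => le_of_eq (h1 w)
    · calc (1:ℝ) = ‖Matrix.toEuclideanCLM (𝕜 := ℝ)
            (List.ofFn fun i => triA ((fun _ : Fin T => (0 : Fin 2)) i)).prod‖ :=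
            (h1 (fun _ => 0)).symm
        _ ≤ _ := Finset.le_sup'
            (fun w : Fin T → Fin 2 =>
              ‖Matrix.toEuclideanCLM (𝕜 := ℝ) (List.ofFn fun i => triA (w i)).prod‖)
            (Finset.mem_univ (fun _ : Fin T => (0 : Fin 2)))
  have heq : (fun T : ℕ => (Finset.univ.sup' Finset.univ_nonempty
      fun w : Fin T → Fin 2 =>
        ‖Matrix.toEuclideanCLM (𝕜 := ℝ) (List.ofFn fun i => triA (w i)).prod‖)
      ^ ((1 : ℝ) / T)) = fun _ => (1:ℝ) := by
    funext T
    rw [hconst T, Real.one_rpow]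
  rw [heq]
  exact tendsto_const_nhds
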